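/- In the block composite setting, fix x ∈ E, a block index i, and β > 0. Let C ⊆ E be a convex set containing x and x₊, and suppose ∇_i f is L^f_i-Lipschitz on C and ∇_i F is L^F_i-Lipschitz on C (operator norm), with L^F_i > 0 and β > L^f_i. Assume β ≥ L^f_i + L^F_i √(2 L_h) √(φ(x) − φ^*). Let s₊ be a global minimizer over ℝ^{n_i} of q_β(s) = φ̄^i(s;x) + (β/2)‖s − x^i‖² and set x₊ = x[i↦s₊]. Then ‖∇h(l^i_F(s₊;x))‖ ≤ (β − L^f_i)/L^F_i − L^F_i L_h ‖x₊ − x‖². -/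

import Mathlib

/-!
With `d = s₊ - xⁱ` and `u = l^i_F(s₊;x)`: the block model `φ̄ⁱ(·;x)` is convex, so comparing its
regularized minimizer `s₊` with `xⁱ` gives `φ̄ⁱ(s₊;x) + β‖d‖² ≤ φ̄ⁱ(xⁱ;x)`. The descent lemma for
`∇ᵢf` bounds `f(x₊)` by `l^i_f(s₊;x) + (L^f_i/2)‖d‖²`, and together with the lower bounds at `x₊`
this yields `h(u) - h^* ≤ φ(x) - φ^* - (β - L^f_i/2)‖d‖²`. As `h` is `L_h`-smooth and bounded
below, `‖∇h(u)‖² ≤ 2L_h(h(u) - h^*)`, and the step-size condition turns the resulting bound into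
the square of `(β - L^f_i)/L^F_i - L^F_i L_h‖d‖²`; finally `‖x₊ - x‖ = ‖d‖`.
-/

open scoped RealInnerProductSpace

/-- `upd x i s` is `x` with its `i`-th block replaced by `s`, in the Euclidean
product space `E = ℝ^{n 0} × ⋯ × ℝ^{n (b-1)}`. -/
noncomputable def upd {b : ℕ} {n : Fin b → ℕ}
    (x : PiLp 2 (fun i => EuclideanSpace ℝ (Fin (n i)))) (i : Fin b)
    (s : EuclideanSpace ℝ (Fin (n i))) :
    PiLp 2 (fun i => EuclideanSpace ℝ (Fin (n i))) :=
  WithLp.toLp 2 (Function.update x i s)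

open Set

theorem image_one_le_of_hasDerivAt_le_add_mul {ψ ψ' : ℝ → ℝ} {c L : ℝ}
    (hψ : ∀ t ∈ Icc (0 : ℝ) 1, HasDerivAt ψ (ψ' t) t)
    (hψ' : ∀ t ∈ Icc (0 : ℝ) 1, ψ' t ≤ c + L * t) :
    ψ 1 ≤ ψ 0 + c + L / 2 := by
  have hB (t : ℝ) : HasDerivAt (fun t : ℝ => ψ 0 + c * t + L / 2 * t ^ 2) (c + L * t) t :=
    ((((hasDerivAt_id t).const_mul c).const_add (ψ 0)).add
      ((hasDerivAt_pow 2 t).const_mul (L / 2))).congr_deriv (by simp; ring)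
  have := image_le_of_deriv_right_le_deriv_boundary (a := 0) (b := 1) (f := ψ)
    (fun t ht => (hψ t ht).continuousAt.continuousWithinAt)
    (fun t ht => (hψ t (Ico_subset_Icc_self ht)).hasDerivWithinAt) (by simp)
    (fun t _ => (hB t).continuousAt.continuousWithinAt)
    (fun t _ => (hB t).hasDerivWithinAt)
    (fun t ht => hψ' t (Ico_subset_Icc_self ht)) (right_mem_Icc.2 zero_le_one)
  simpa using this

section LipschitzGradient

variable {E : Type*} [NormedAddCommGroup E] [InnerProductSpace ℝ E] [CompleteSpace E]

theorem le_add_inner_add_mul_norm_sq_of_lipschitz_gradient {φ : E → ℝ} {G : E → E}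
    {K : Set E} {L : ℝ} (hK : Convex ℝ K) (hφ : ∀ u ∈ K, HasGradientAt φ (G u) u)
    (hG : ∀ u ∈ K, ∀ v ∈ K, ‖G u - G v‖ ≤ L * ‖u - v‖) {u v : E} (hu : u ∈ K) (hv : v ∈ K) :
    φ v ≤ φ u + ⟪G u, v - u⟫ + L / 2 * ‖v - u‖ ^ 2 := by
  have hseg : ∀ t ∈ Icc (0 : ℝ) 1, u + t • (v - u) ∈ K := fun t ht =>
    hK.add_smul_sub_mem hu hv ht
  have hderiv : ∀ t ∈ Icc (0 : ℝ) 1,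
      HasDerivAt (fun t : ℝ => φ (u + t • (v - u))) ⟪G (u + t • (v - u)), v - u⟫ t := by
    intro t ht
    have hline : HasDerivAt (fun t : ℝ => u + t • (v - u)) (v - u) t := by
      simpa using ((hasDerivAt_id t).smul_const (v - u)).const_add u
    simpa [InnerProductSpace.toDual_apply_apply, Function.comp_def] using
      (hφ _ (hseg t ht)).hasFDerivAt.comp_hasDerivAt t hline
  have hbound : ∀ t ∈ Icc (0 : ℝ) 1,
      ⟪G (u + t • (v - u)), v - u⟫ ≤ ⟪G u, v - u⟫ + L * ‖v - u‖ ^ 2 * t := by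
    intro t ht
    have hlip : ‖G (u + t • (v - u)) - G u‖ ≤ L * (t * ‖v - u‖) := by
      simpa [norm_smul, abs_of_nonneg ht.1] using hG _ (hseg t ht) u hu
    have := real_inner_le_norm (G (u + t • (v - u)) - G u) (v - u)
    rw [inner_sub_left] at this
    nlinarith [mul_le_mul_of_nonneg_right hlip (norm_nonneg (v - u))]
  have := image_one_le_of_hasDerivAt_le_add_mul hderiv hbound
  simp only [one_smul, zero_smul, add_zero, add_sub_cancel] at this
  linarith

theorem norm_sq_le_of_lipschitz_gradient {φ : E → ℝ} {G : E → E} {L φmin : ℝ} (hL : 0 < L)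
    (hφ : ∀ u, HasGradientAt φ (G u) u) (hG : ∀ u v, ‖G u - G v‖ ≤ L * ‖u - v‖)
    (hφmin : ∀ u, φmin ≤ φ u) (u : E) :
    ‖G u‖ ^ 2 ≤ 2 * L * (φ u - φmin) := by
  have hstep := le_add_inner_add_mul_norm_sq_of_lipschitz_gradient convex_univ
    (fun u _ => hφ u) (fun u _ v _ => hG u v) (mem_univ u) (mem_univ (u - L⁻¹ • G u))
  rw [sub_sub_cancel_left, inner_neg_right, real_inner_smul_right, real_inner_self_eq_norm_sq,
    norm_neg, norm_smul, Real.norm_of_nonneg (inv_nonneg.2 hL.le)] at hstep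
  rw [show L / 2 * (L⁻¹ * ‖G u‖) ^ 2 = L⁻¹ / 2 * ‖G u‖ ^ 2 by field_simp] at hstep
  calc ‖G u‖ ^ 2 = 2 * L * (L⁻¹ / 2 * ‖G u‖ ^ 2) := by field_simp
    _ ≤ 2 * L * (φ u - φmin) := by
      gcongr
      linarith [hφmin (u - L⁻¹ • G u)]

end LipschitzGradient

theorem ConvexOn.add_mul_norm_sq_le_of_forall_le {E : Type*} [NormedAddCommGroup E]
    [NormedSpace ℝ E] {φ : E → ℝ} (hφ : ConvexOn ℝ univ φ) {a s : E} {β : ℝ}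
    (hmin : ∀ t, φ s + β / 2 * ‖s - a‖ ^ 2 ≤ φ t + β / 2 * ‖t - a‖ ^ 2) :
    φ s + β * ‖s - a‖ ^ 2 ≤ φ a := by
  -- Compare `s` with `(1 - τ) • s + τ • a`, divide by `τ` and let `τ → 0⁺`.
  have hτ : ∀ τ ∈ Ioo (0 : ℝ) 1, φ s + β * ‖s - a‖ ^ 2 ≤ φ a + β / 2 * ‖s - a‖ ^ 2 * τ := by
    rintro τ ⟨hτ0, hτ1⟩
    have hconv := hφ.2 (mem_univ s) (mem_univ a) (sub_nonneg.2 hτ1.le) hτ0.le (by ring)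
    have hnorm : ‖(1 - τ) • s + τ • a - a‖ = (1 - τ) * ‖s - a‖ := by
      rw [show (1 - τ) • s + τ • a - a = (1 - τ) • (s - a) by module, norm_smul,
        Real.norm_of_nonneg (sub_nonneg.2 hτ1.le)]
    have hq := hmin ((1 - τ) • s + τ • a)
    rw [hnorm] at hq
    simp only [smul_eq_mul] at hconv
    nlinarith
  have hlim : Filter.Tendsto (fun τ : ℝ => φ a + β / 2 * ‖s - a‖ ^ 2 * τ)
      (nhdsWithin 0 (Ioi 0)) (nhds (φ a)) := by
    have : Continuous (fun τ : ℝ => φ a + β / 2 * ‖s - a‖ ^ 2 * τ) := by fun_prop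
    simpa using (this.tendsto 0).mono_left nhdsWithin_le_nhds
  exact ge_of_tendsto hlim (Filter.eventually_of_mem (Ioo_mem_nhdsGT zero_lt_one) hτ)

theorem convexOn_linearized_model {V W : Type*} [NormedAddCommGroup V] [InnerProductSpace ℝ V]
    [NormedAddCommGroup W] [NormedSpace ℝ W] {h : W → ℝ} {g : V → ℝ}
    (hh : ConvexOn ℝ univ h) (hg : ConvexOn ℝ univ g) (c : ℝ) (v a : V) (u : W)
    (A : V →L[ℝ] W) :
    ConvexOn ℝ univ (fun t => c + ⟪v, t - a⟫ + h (u + A (t - a)) + g t) := by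
  have hlin : ConvexOn ℝ univ (fun t => ⟪v, t - a⟫) := by
    simpa [Function.comp_def, sub_eq_neg_add] using
      (((innerₛₗ ℝ v).convexOn convex_univ).translate_right (-a))
  have hcomp : ConvexOn ℝ univ (fun t => h (u + A (t - a))) := by
    simpa [Function.comp_def, sub_eq_neg_add] using
      ((hh.translate_right u).comp_linearMap (A : V →ₗ[ℝ] W)).translate_right (-a)
  exact (((convexOn_const c convex_univ).add hlin).add hcomp).add hg

section BlockUpdate

variable {b : ℕ} {n : Fin b → ℕ} (x : PiLp 2 (fun i => EuclideanSpace ℝ (Fin (n i))))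
  (i : Fin b)

@[simp]
theorem upd_apply_self (s : EuclideanSpace ℝ (Fin (n i))) : upd x i s i = s := by
  simp [upd]

theorem upd_apply_of_ne {j : Fin b} (hj : j ≠ i) (s : EuclideanSpace ℝ (Fin (n i))) :
    upd x i s j = x j := by
  simp [upd, Function.update_of_ne hj]

@[simp]
theorem upd_upd (s t : EuclideanSpace ℝ (Fin (n i))) : upd (upd x i s) i t = upd x i t := by
  simp [upd]

@[simp]
theorem upd_self : upd x i (x i) = x := by
  simp [upd]

theorem upd_sub_upd (s t : EuclideanSpace ℝ (Fin (n i))) :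
    upd x i s - upd x i t = PiLp.single 2 i (s - t) := by
  ext1 j
  by_cases hj : j = i
  · subst hj
    simp
  · simp [upd_apply_of_ne x i hj, Pi.single_eq_of_ne hj]

theorem norm_upd_sub_upd (s t : EuclideanSpace ℝ (Fin (n i))) :
    ‖upd x i s - upd x i t‖ = ‖s - t‖ := by
  rw [upd_sub_upd, PiLp.norm_single]

theorem norm_upd_sub (s : EuclideanSpace ℝ (Fin (n i))) : ‖upd x i s - x‖ = ‖s - x i‖ := by
  simpa using norm_upd_sub_upd x i s (x i)

theorem Convex.preimage_upd {C : Set (PiLp 2 (fun i => EuclideanSpace ℝ (Fin (n i))))}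
    (hC : Convex ℝ C) : Convex ℝ {s | upd x i s ∈ C} := by
  intro s hs t ht a c ha hc hac
  show upd x i (a • s + c • t) ∈ C
  convert hC hs ht ha hc hac using 1
  ext1 j
  by_cases hj : j = i
  · subst hj
    simp
  · simp [upd_apply_of_ne x i hj, ← add_smul, hac]

theorem sum_upd_add (g : (i : Fin b) → EuclideanSpace ℝ (Fin (n i)) → ℝ)
    (s : EuclideanSpace ℝ (Fin (n i))) :
    ∑ j, g j (upd x i s j) + g i (x i) = ∑ j, g j (x j) + g i s := by
  rw [← Finset.add_sum_erase _ _ (Finset.mem_univ i),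
    ← Finset.add_sum_erase _ _ (Finset.mem_univ i), upd_apply_self,
    Finset.sum_congr rfl fun j hj => by rw [upd_apply_of_ne x i (Finset.ne_of_mem_erase hj)]]
  ring

end BlockUpdate

theorem le_add_inner_add_mul_norm_sq_upd {b : ℕ} {n : Fin b → ℕ}
    {f : PiLp 2 (fun i => EuclideanSpace ℝ (Fin (n i))) → ℝ} {i : Fin b}
    {gif : PiLp 2 (fun i => EuclideanSpace ℝ (Fin (n i))) → EuclideanSpace ℝ (Fin (n i))}
    {C : Set (PiLp 2 (fun i => EuclideanSpace ℝ (Fin (n i))))} {L : ℝ} (hC : Convex ℝ C)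
    (hgif : ∀ y, HasGradientAt (fun s => f (upd y i s)) (gif y) (y i))
    (hgifLip : ∀ y ∈ C, ∀ z ∈ C, ‖gif y - gif z‖ ≤ L * ‖y - z‖)
    {x : PiLp 2 (fun i => EuclideanSpace ℝ (Fin (n i)))} {s : EuclideanSpace ℝ (Fin (n i))}
    (hx : x ∈ C) (hs : upd x i s ∈ C) :
    f (upd x i s) ≤ f x + ⟪gif x, s - x i⟫ + L / 2 * ‖s - x i‖ ^ 2 := by
  simpa using le_add_inner_add_mul_norm_sq_of_lipschitz_gradient (φ := fun s => f (upd x i s))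
    (G := fun s => gif (upd x i s)) (hC.preimage_upd x i)
    (fun t _ => by simpa using hgif (upd x i t))
    (fun t ht t' ht' => by simpa [norm_upd_sub_upd] using hgifLip _ ht _ ht')
    (u := x i) (by simpa using hx) hs

theorem le_div_sub_of_sq_le {N H A D Lh Lf LF β : ℝ} (hLh : 0 ≤ Lh)
    (hLF : 0 < LF) (hβ : Lf < β) (hLfD : 0 ≤ Lf * D) (hN2 : N ^ 2 ≤ 2 * Lh * H)
    (hH : H ≤ A - (β - Lf / 2) * D) (hA : LF ^ 2 * (2 * Lh) * A ≤ (β - Lf) ^ 2) :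
    N ≤ (β - Lf) / LF - LF * Lh * D := by
  set c := LF ^ 2 * Lh * D
  have hLfc : 0 ≤ Lf * c := by
    rw [show Lf * c = LF ^ 2 * Lh * (Lf * D) by ring]
    exact mul_nonneg (by positivity) hLfD
  have hsq : (LF * N) ^ 2 ≤ (β - Lf) ^ 2 - 2 * (β - Lf) * c - Lf * c := by
    have := mul_le_mul_of_nonneg_left (hN2.trans (mul_le_mul_of_nonneg_left hH (by positivity)))
      (sq_nonneg LF)
    nlinarith
  have hc : c ≤ β - Lf := by nlinarith [sq_nonneg (LF * N)]
  have hLFN : LF * N ≤ β - Lf - c :=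
    abs_le_of_sq_le_sq' (by nlinarith [sq_nonneg c]) (by linarith) |>.2
  rw [le_sub_iff_add_le, div_eq_mul_inv, le_mul_inv_iff₀ hLF]
  linarith

theorem gradient_norm_bound_at_linearization_general
    {b m : ℕ} {n : Fin b → ℕ}
    (f : PiLp 2 (fun i => EuclideanSpace ℝ (Fin (n i))) → ℝ)
    (F : PiLp 2 (fun i => EuclideanSpace ℝ (Fin (n i))) → EuclideanSpace ℝ (Fin m))
    (h : EuclideanSpace ℝ (Fin m) → ℝ)
    (hhconv : ConvexOn ℝ Set.univ h)
    (Lh : ℝ) (hLh : 0 < Lh)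
    (gradh : EuclideanSpace ℝ (Fin m) → EuclideanSpace ℝ (Fin m))
    (hgradh : ∀ u, HasGradientAt h (gradh u) u)
    (hgradhLip : ∀ u v, ‖gradh u - gradh v‖ ≤ Lh * ‖u - v‖)
    (g : (i : Fin b) → EuclideanSpace ℝ (Fin (n i)) → ℝ)
    (hg : ∀ i, ConvexOn ℝ Set.univ (g i))
    -- lower bounds `f ≥ f^*`, `h ≥ h^*`, `Σᵢ gᵢ ≥ g^*`; `φ^* = f^* + h^* + g^*`
    (fstar hstar gstar : ℝ)
    (hfstar : ∀ y, fstar ≤ f y) (hhstar : ∀ u, hstar ≤ h u)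
    (hgstar : ∀ y : PiLp 2 (fun i => EuclideanSpace ℝ (Fin (n i))), gstar ≤ ∑ j, g j (y j))
    (x : PiLp 2 (fun i => EuclideanSpace ℝ (Fin (n i)))) (i : Fin b)
    (β Lf LF : ℝ) (hLF : 0 < LF) (hβLf : Lf < β)
    -- `gif y = ∇_i f(y)`, the gradient at `y^i` of `s ↦ f(y[i ↦ s])`
    (gif : PiLp 2 (fun i => EuclideanSpace ℝ (Fin (n i))) → EuclideanSpace ℝ (Fin (n i)))
    (hgif : ∀ y, HasGradientAt (fun s => f (upd y i s)) (gif y) (y i))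
    -- `GiF y = ∇_i F(y)`, the Fréchet derivative at `y^i` of `s ↦ F(y[i ↦ s])`
    (GiF : PiLp 2 (fun i => EuclideanSpace ℝ (Fin (n i))) →
      (EuclideanSpace ℝ (Fin (n i)) →L[ℝ] EuclideanSpace ℝ (Fin m)))
    -- step-size condition `β ≥ L^f_i + L^F_i √(2 L_h) √(φ(x) − φ^*)`
    (hβcond : Lf + LF * Real.sqrt (2 * Lh) *
        Real.sqrt ((f x + h (F x) + ∑ j, g j (x j)) - (fstar + hstar + gstar)) ≤ β)
    -- `sp` is a global minimizer of `q_β(s) = φ̄^i(s;x) + (β/2)‖s − x^i‖²`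
    (sp : EuclideanSpace ℝ (Fin (n i)))
    (hmin : ∀ t,
      (f x + ⟪gif x, sp - x i⟫ + h (F x + GiF x (sp - x i)) + g i sp)
          + β / 2 * ‖sp - x i‖ ^ 2
        ≤ (f x + ⟪gif x, t - x i⟫ + h (F x + GiF x (t - x i)) + g i t)
          + β / 2 * ‖t - x i‖ ^ 2)
    -- `C` is a convex set containing `x` and `x₊ = x[i ↦ sp]`, on which the block
    -- gradients of `f` and `F` are Lipschitz
    (C : Set (PiLp 2 (fun i => EuclideanSpace ℝ (Fin (n i)))))
    (hC : Convex ℝ C) (hxC : x ∈ C) (hxpC : upd x i sp ∈ C)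
    (hgifLip : ∀ y ∈ C, ∀ z ∈ C, ‖gif y - gif z‖ ≤ Lf * ‖y - z‖) :
    ‖gradh (F x + GiF x (sp - x i))‖
      ≤ (β - Lf) / LF - LF * Lh * ‖upd x i sp - x‖ ^ 2 := by
  set A := (f x + h (F x) + ∑ j, g j (x j)) - (fstar + hstar + gstar)
  have hA : LF ^ 2 * (2 * Lh) * A ≤ (β - Lf) ^ 2 := by
    have hA0 : 0 ≤ A := by linarith [hfstar x, hhstar (F x), hgstar x]
    have := pow_le_pow_left₀ (by positivity) (le_sub_iff_add_le'.2 hβcond) 2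
    rwa [mul_pow, mul_pow, Real.sq_sqrt (by positivity), Real.sq_sqrt hA0] at this
  have hdescent := le_add_inner_add_mul_norm_sq_upd hC hgif hgifLip hxC hxpC
  have hopt := (convexOn_linearized_model hhconv (hg i) (f x) (gif x) (x i) (F x)
    (GiF x)).add_mul_norm_sq_le_of_forall_le hmin
  simp only [sub_self, inner_zero_right, map_zero, add_zero] at hopt
  have hLfD : 0 ≤ Lf * ‖upd x i sp - x‖ ^ 2 := by
    rw [pow_two, ← mul_assoc]
    exact mul_nonneg ((norm_nonneg _).trans (hgifLip _ hxpC _ hxC)) (norm_nonneg _)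
  rw [norm_upd_sub] at hLfD ⊢
  have hgap : h (F x + GiF x (sp - x i)) - hstar ≤ A - (β - Lf / 2) * ‖sp - x i‖ ^ 2 := by
    linarith [sum_upd_add x i g sp, hfstar (upd x i sp), hgstar (upd x i sp)]
  exact le_div_sub_of_sq_le hLh.le hLF hβLf hLfD
    (norm_sq_le_of_lipschitz_gradient hLh hgradh hgradhLip hhstar _) hgap hA

/-- inner estimate in Lemma 3.1: under the step-size condition
`β ≥ L^f_i + L^F_i √(2L_h) √(φ(x) − φ^*)`, at a global minimizer `sp` of the
regularized block model one has
`‖∇h(l^i_F(sp;x))‖ ≤ (β − L^f_i)/L^F_i − L^F_i L_h ‖x₊ − x‖²`. -/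
theorem gradient_norm_bound_at_linearization
    {b m : ℕ} (hb : 0 < b) (hm : 0 < m) {n : Fin b → ℕ} (hn : ∀ i, 0 < n i)
    (f : PiLp 2 (fun i => EuclideanSpace ℝ (Fin (n i))) → ℝ)
    (hf : Differentiable ℝ f)
    (F : PiLp 2 (fun i => EuclideanSpace ℝ (Fin (n i))) → EuclideanSpace ℝ (Fin m))
    (hF : Differentiable ℝ F)
    (h : EuclideanSpace ℝ (Fin m) → ℝ)
    (hhconv : ConvexOn ℝ Set.univ h) (hhdiff : Differentiable ℝ h)
    (Lh : ℝ) (hLh : 0 < Lh)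
    (gradh : EuclideanSpace ℝ (Fin m) → EuclideanSpace ℝ (Fin m))
    (hgradh : ∀ u, HasGradientAt h (gradh u) u)
    (hgradhLip : ∀ u v, ‖gradh u - gradh v‖ ≤ Lh * ‖u - v‖)
    (g : (i : Fin b) → EuclideanSpace ℝ (Fin (n i)) → ℝ)
    (hg : ∀ i, ConvexOn ℝ Set.univ (g i))
    -- lower bounds `f ≥ f^*`, `h ≥ h^*`, `Σᵢ gᵢ ≥ g^*`; `φ^* = f^* + h^* + g^*`
    (fstar hstar gstar : ℝ)
    (hfstar : ∀ y, fstar ≤ f y) (hhstar : ∀ u, hstar ≤ h u)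
    (hgstar : ∀ y : PiLp 2 (fun i => EuclideanSpace ℝ (Fin (n i))), gstar ≤ ∑ j, g j (y j))
    (x : PiLp 2 (fun i => EuclideanSpace ℝ (Fin (n i)))) (i : Fin b)
    (β Lf LF : ℝ) (hβ : 0 < β) (hLF : 0 < LF) (hβLf : Lf < β)
    -- `gif y = ∇_i f(y)`, the gradient at `y^i` of `s ↦ f(y[i ↦ s])`
    (gif : PiLp 2 (fun i => EuclideanSpace ℝ (Fin (n i))) → EuclideanSpace ℝ (Fin (n i)))
    (hgif : ∀ y, HasGradientAt (fun s => f (upd y i s)) (gif y) (y i))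
    -- `GiF y = ∇_i F(y)`, the Fréchet derivative at `y^i` of `s ↦ F(y[i ↦ s])`
    (GiF : PiLp 2 (fun i => EuclideanSpace ℝ (Fin (n i))) →
      (EuclideanSpace ℝ (Fin (n i)) →L[ℝ] EuclideanSpace ℝ (Fin m)))
    (hGiF : ∀ y, HasFDerivAt (fun s => F (upd y i s)) (GiF y) (y i))
    -- step-size condition `β ≥ L^f_i + L^F_i √(2 L_h) √(φ(x) − φ^*)`
    (hβcond : Lf + LF * Real.sqrt (2 * Lh) *
        Real.sqrt ((f x + h (F x) + ∑ j, g j (x j)) - (fstar + hstar + gstar)) ≤ β)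
    -- `sp` is a global minimizer of `q_β(s) = φ̄^i(s;x) + (β/2)‖s − x^i‖²`
    (sp : EuclideanSpace ℝ (Fin (n i)))
    (hmin : ∀ t,
      (f x + ⟪gif x, sp - x i⟫ + h (F x + GiF x (sp - x i)) + g i sp)
          + β / 2 * ‖sp - x i‖ ^ 2
        ≤ (f x + ⟪gif x, t - x i⟫ + h (F x + GiF x (t - x i)) + g i t)
          + β / 2 * ‖t - x i‖ ^ 2)
    -- `C` is a convex set containing `x` and `x₊ = x[i ↦ sp]`, on which the block
    -- gradients of `f` and `F` are Lipschitz
    (C : Set (PiLp 2 (fun i => EuclideanSpace ℝ (Fin (n i)))))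
    (hC : Convex ℝ C) (hxC : x ∈ C) (hxpC : upd x i sp ∈ C)
    (hgifLip : ∀ y ∈ C, ∀ z ∈ C, ‖gif y - gif z‖ ≤ Lf * ‖y - z‖)
    (hGiFLip : ∀ y ∈ C, ∀ z ∈ C, ‖GiF y - GiF z‖ ≤ LF * ‖y - z‖) :
    ‖gradh (F x + GiF x (sp - x i))‖
      ≤ (β - Lf) / LF - LF * Lh * ‖upd x i sp - x‖ ^ 2 :=
  gradient_norm_bound_at_linearization_general f F h hhconv Lh hLh gradh hgradh hgradhLip g hg fstar
    hstar gstar hfstar hhstar hgstar x i β Lf LF hLF hβLf gif hgif GiF hβcond sp hmin C hC hxC hxpC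
    hgifLip
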